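/- arXiv:1111.5863 — 4 statements merged into one kernel-verified Lean document; each statement's English description precedes it below -/
import Mathlib

section
/- For every natural number m such that m ≠ 2^k − 1 for all natural numbers k (equivalently, m + 1 is not a power of 2), there exists an admissible triple (n, j, i) with f(n, j, i) = m. -/
/-- For natural numbers `n, j, i`, the triple `(n, j, i)` is *admissible* if `n ≥ 1`,
and moreover `j ≥ 1` whenever `n = 1`. -/
def Admissible (n j i : ℕ) : Prop := 1 ≤ n ∧ (n = 1 → 1 ≤ j)

/-- `f n j i = ((4n − 2)·2^j − 1)·2^i − 1`. -/
def f (n j i : ℕ) : ℕ := ((4 * n - 2) * 2 ^ j - 1) * 2 ^ i - 1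

/-- Every natural number `m` not of the form `2^k − 1` is of the form `f n j i`
for some admissible triple `(n, j, i)`. -/
theorem exists_admissible_f_eq (m : ℕ) (hm : ∀ k : ℕ, m ≠ 2 ^ k - 1) :
    ∃ n j i : ℕ, Admissible n j i ∧ f n j i = m := by
  obtain ⟨i, q, hq, hmq⟩ :=
    Nat.exists_eq_pow_mul_and_not_dvd (show m + 1 ≠ 0 by omega) 2 (by norm_num)
  have hpow : 1 ≤ 2 ^ i := Nat.one_le_two_pow
  have hq1 : q ≠ 1 := by
    intro h
    subst h
    simp at hmq
    exact hm i (by omega)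
  have hq3 : 3 ≤ q := by omega
  obtain ⟨a, t, ht, hqt⟩ :=
    Nat.exists_eq_pow_mul_and_not_dvd (show q + 1 ≠ 0 by omega) 2 (by norm_num)
  have ha : 1 ≤ a := by
    rcases a with _ | a
    · simp at hqt; omega
    · omega
  have ht1 : 1 ≤ t := by
    rcases Nat.eq_zero_or_pos t with h | h
    · subst h; simp at hqt
    · exact h
  refine ⟨(t + 1) / 2, a - 1, i, ⟨by omega, ?_⟩, ?_⟩
  · intro hn
    have htt : t = 1 := by omega
    by_contra hj0
    have ha1 : a = 1 := by omega
    rw [ha1, htt] at hqt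
    norm_num at hqt
    omega
  · have hto : t % 2 = 1 := by omega
    have h4n : 4 * ((t + 1) / 2) - 2 = 2 * t := by omega
    have h2a : 2 ^ a = 2 * 2 ^ (a - 1) := by
      rw [← pow_succ']
      congr 1
      omega
    have key : (4 * ((t + 1) / 2) - 2) * 2 ^ (a - 1) = q + 1 := by
      rw [h4n, hqt, h2a]; ring
    have h2 : q * 2 ^ i = m + 1 := by rw [mul_comm]; omega
    unfold f
    rw [key]
    simp only [Nat.add_sub_cancel]
    omega
end

section
/- The function f is injective on admissible triples: if (n, j, i) and (n', j', i') are admissible triples with f(n, j, i) = f(n', j', i'), then n = n', j = j' and i = i'. -/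
lemma odd_mul_pow_inj (a b : ℕ) : ∀ i i', Odd a → Odd b → a * 2 ^ i = b * 2 ^ i' →
    a = b ∧ i = i' := by
  intro i
  induction i with
  | zero =>
    intro i' ha hb h
    cases i' with
    | zero => simpa using h
    | succ k =>
      exfalso
      rw [Nat.odd_iff] at ha
      have : 2 ∣ a := ⟨b * 2 ^ k, by rw [pow_succ, ← mul_assoc] at h; omega⟩
      omega
  | succ k ih =>
    intro i' ha hb h
    cases i' with
    | zero =>
      exfalso
      rw [Nat.odd_iff] at hb
      have : 2 ∣ b := ⟨a * 2 ^ k, by rw [pow_succ, ← mul_assoc] at h; omega⟩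
      omega
    | succ l =>
      have h2 : a * 2 ^ k = b * 2 ^ l := by
        rw [pow_succ, pow_succ, ← mul_assoc, ← mul_assoc] at h
        omega
      obtain ⟨h1, h2⟩ := ih l ha hb h2
      exact ⟨h1, by omega⟩

/-- `f` is injective on admissible triples. -/
theorem f_injective_on_admissible (n j i n' j' i' : ℕ)
    (h : Admissible n j i) (h' : Admissible n' j' i')
    (heq : f n j i = f n' j' i') :
    n = n' ∧ j = j' ∧ i = i' := by
  obtain ⟨hn, hj⟩ := h
  obtain ⟨hn', hj'⟩ := h'
  have hb : 4 ≤ (4 * n - 2) * 2 ^ j := by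
    rcases Nat.lt_or_ge n 2 with h2 | h2
    · interval_cases n
      have h1 : 1 ≤ j := hj rfl
      have h3 : 2 ≤ 2 ^ j := by
        calc 2 = 2 ^ 1 := rfl
        _ ≤ 2 ^ j := Nat.pow_le_pow_right (by norm_num) h1
      omega
    · calc 4 ≤ (4 * n - 2) * 1 := by omega
      _ ≤ (4 * n - 2) * 2 ^ j := Nat.mul_le_mul_left _ Nat.one_le_two_pow
  have hb' : 4 ≤ (4 * n' - 2) * 2 ^ j' := by
    rcases Nat.lt_or_ge n' 2 with h2 | h2
    · interval_cases n'
      have h1 : 1 ≤ j' := hj' rfl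
      have h3 : 2 ≤ 2 ^ j' := by
        calc 2 = 2 ^ 1 := rfl
        _ ≤ 2 ^ j' := Nat.pow_le_pow_right (by norm_num) h1
      omega
    · calc 4 ≤ (4 * n' - 2) * 1 := by omega
      _ ≤ (4 * n' - 2) * 2 ^ j' := Nat.mul_le_mul_left _ Nat.one_le_two_pow
  obtain ⟨M, hM⟩ : ∃ M, (4 * n - 2) * 2 ^ j - 1 = M := ⟨_, rfl⟩
  obtain ⟨M', hM'⟩ : ∃ M', (4 * n' - 2) * 2 ^ j' - 1 = M' := ⟨_, rfl⟩
  have hM3 : 3 ≤ M := by omega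
  have hM3' : 3 ≤ M' := by omega
  have hodd : Odd M := by
    rw [Nat.odd_iff]
    have : 2 ∣ (4 * n - 2) * 2 ^ j := Dvd.dvd.mul_right ⟨2 * n - 1, by omega⟩ _
    omega
  have hodd' : Odd M' := by
    rw [Nat.odd_iff]
    have : 2 ∣ (4 * n' - 2) * 2 ^ j' := Dvd.dvd.mul_right ⟨2 * n' - 1, by omega⟩ _
    omega
  unfold f at heq
  rw [hM, hM'] at heq
  have h1 : 1 ≤ M * 2 ^ i := Nat.mul_pos (by omega) (by positivity)
  have h2 : 1 ≤ M' * 2 ^ i' := Nat.mul_pos (by omega) (by positivity)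
  have hkey : M * 2 ^ i = M' * 2 ^ i' := by omega
  obtain ⟨hmeq, hieq⟩ := odd_mul_pow_inj M M' i i' hodd hodd' hkey
  have e1 : (2 * n - 1) * 2 ^ (j + 1) = (4 * n - 2) * 2 ^ j := by
    have h4 : 2 * (2 * n - 1) = 4 * n - 2 := by omega
    calc (2 * n - 1) * 2 ^ (j + 1) = (2 * (2 * n - 1)) * 2 ^ j := by rw [pow_succ]; ring
    _ = (4 * n - 2) * 2 ^ j := by rw [h4]
  have e2 : (2 * n' - 1) * 2 ^ (j' + 1) = (4 * n' - 2) * 2 ^ j' := by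
    have h4 : 2 * (2 * n' - 1) = 4 * n' - 2 := by omega
    calc (2 * n' - 1) * 2 ^ (j' + 1) = (2 * (2 * n' - 1)) * 2 ^ j' := by rw [pow_succ]; ring
    _ = (4 * n' - 2) * 2 ^ j' := by rw [h4]
  have hkey2 : (2 * n - 1) * 2 ^ (j + 1) = (2 * n' - 1) * 2 ^ (j' + 1) := by
    rw [e1, e2]; omega
  have ho1 : Odd (2 * n - 1) := by rw [Nat.odd_iff]; omega
  have ho2 : Odd (2 * n' - 1) := by rw [Nat.odd_iff]; omega
  obtain ⟨hne, hje⟩ := odd_mul_pow_inj _ _ _ _ ho1 ho2 hkey2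
  exact ⟨by omega, by omega, hieq⟩
end

section
/- The map (n, j, i) ↦ f(n, j, i) is a bijection from the set of admissible triples of natural numbers onto the set { m : ℕ | m ≠ 2^k − 1 for every natural number k }. -/
/-- Uniqueness of the decomposition `odd · 2^i`. -/
lemma odd_mul_pow_two_inj : ∀ (i : ℕ) {j a b : ℕ}, ¬ 2 ∣ a → ¬ 2 ∣ b →
    a * 2 ^ i = b * 2 ^ j → i = j ∧ a = b := by
  intro i
  induction i with
  | zero =>
    intro j a b ha hb h
    cases j with
    | zero => simp at h; exact ⟨rfl, h⟩
    | succ j' =>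
      exact absurd ⟨b * 2 ^ j', by rw [pow_zero, mul_one] at h; rw [h, pow_succ]; ring⟩ ha
  | succ i' ih =>
    intro j a b ha hb h
    cases j with
    | zero =>
      exact absurd ⟨a * 2 ^ i', by rw [pow_zero, mul_one] at h; rw [← h, pow_succ]; ring⟩ hb
    | succ j' =>
      have h2 : a * 2 ^ i' * 2 = b * 2 ^ j' * 2 := by
        rw [pow_succ, pow_succ, ← mul_assoc, ← mul_assoc] at h
        exact h
      have h3 := Nat.eq_of_mul_eq_mul_right (by norm_num) h2
      obtain ⟨hij, hab⟩ := ih ha hb h3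
      exact ⟨by omega, hab⟩

lemma f_succ (n j i : ℕ) (h : Admissible n j i) :
    f n j i + 1 = ((4 * n - 2) * 2 ^ j - 1) * 2 ^ i ∧
      ¬ 2 ∣ ((4 * n - 2) * 2 ^ j - 1) ∧ 3 ≤ (4 * n - 2) * 2 ^ j - 1 := by
  obtain ⟨hn, hj⟩ := h
  have hpow : (4 : ℕ) ≤ (4 * n - 2) * 2 ^ j := by
    rcases Nat.lt_or_ge n 2 with h2 | h2
    · have : n = 1 := by omega
      subst this
      have : (2 : ℕ) ≤ 2 ^ j := Nat.one_lt_two_pow (by omega)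
      calc (4 : ℕ) = 2 * 2 := by norm_num
        _ ≤ (4 * 1 - 2) * 2 ^ j := by
            apply Nat.mul_le_mul <;> omega
    · calc (4 : ℕ) ≤ (4 * n - 2) * 1 := by omega
        _ ≤ (4 * n - 2) * 2 ^ j := Nat.mul_le_mul_left _ (Nat.one_le_two_pow)
  have heven : 2 ∣ (4 * n - 2) * 2 ^ j := Dvd.dvd.mul_right (by omega) _
  refine ⟨?_, by omega, by omega⟩
  have hb : 3 ≤ (4 * n - 2) * 2 ^ j - 1 := by omega
  have : 1 ≤ ((4 * n - 2) * 2 ^ j - 1) * 2 ^ i :=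
    Nat.one_le_iff_ne_zero.mpr (by positivity)
  unfold f
  omega

lemma two_le_of_four_le_pow {s : ℕ} (h : (4 : ℕ) ≤ 2 ^ s) : 2 ≤ s := by
  by_contra hs
  interval_cases s <;> norm_num at h

/-- The map `(n, j, i) ↦ f n j i` is a bijection from the set of admissible triples
onto the set of natural numbers not of the form `2^k − 1`. -/
theorem f_bijOn :
    Set.BijOn (fun p : ℕ × ℕ × ℕ => f p.1 p.2.1 p.2.2)
      {p : ℕ × ℕ × ℕ | Admissible p.1 p.2.1 p.2.2}
      {m : ℕ | ∀ k : ℕ, m ≠ 2 ^ k - 1} := by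
  constructor
  · -- MapsTo
    rintro ⟨n, j, i⟩ hp
    obtain ⟨hsucc, hodd, hb3⟩ := f_succ n j i hp
    simp only [Set.mem_setOf_eq]
    intro k hk
    have h2k : 1 ≤ 2 ^ k := Nat.one_le_two_pow
    have h1 : 1 ≤ ((4 * n - 2) * 2 ^ j - 1) * 2 ^ i :=
      Nat.one_le_iff_ne_zero.mpr (by positivity)
    have hfk : ((4 * n - 2) * 2 ^ j - 1) * 2 ^ i = 1 * 2 ^ k := by
      rw [one_mul]; omega
    obtain ⟨_, hab⟩ := odd_mul_pow_two_inj i hodd (by norm_num) hfk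
    omega
  constructor
  · -- InjOn
    rintro ⟨n, j, i⟩ hp ⟨n', j', i'⟩ hp' hEq
    simp only at hEq
    obtain ⟨hs, ho, h3⟩ := f_succ n j i hp
    obtain ⟨hs', ho', h3'⟩ := f_succ n' j' i' hp'
    have hEq' : ((4 * n - 2) * 2 ^ j - 1) * 2 ^ i
        = ((4 * n' - 2) * 2 ^ j' - 1) * 2 ^ i' := by omega
    obtain ⟨hii, hbb⟩ := odd_mul_pow_two_inj i ho ho' hEq'
    have e1 : (2 * n - 1) * 2 ^ (j + 1) = (4 * n - 2) * 2 ^ j := by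
      rw [pow_succ', ← mul_assoc]
      congr 1
      have : 1 ≤ n := hp.1
      omega
    have e2 : (2 * n' - 1) * 2 ^ (j' + 1) = (4 * n' - 2) * 2 ^ j' := by
      rw [pow_succ', ← mul_assoc]
      congr 1
      have : 1 ≤ n' := hp'.1
      omega
    have hjn : (2 * n - 1) * 2 ^ (j + 1) = (2 * n' - 1) * 2 ^ (j' + 1) := by
      rw [e1, e2]; omega
    have hodd1 : ¬ 2 ∣ (2 * n - 1) := by
      have : 1 ≤ n := hp.1
      omega
    have hodd2 : ¬ 2 ∣ (2 * n' - 1) := by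
      have : 1 ≤ n' := hp'.1
      omega
    obtain ⟨hjj, hnn⟩ := odd_mul_pow_two_inj (j + 1) hodd1 hodd2 hjn
    have : 1 ≤ n := hp.1
    have : 1 ≤ n' := hp'.1
    have : n = n' := by omega
    have : j = j' := by omega
    simp_all
  · -- SurjOn
    rintro m hm
    simp only [Set.mem_setOf_eq] at hm
    have hm0 : m ≠ 0 := by
      intro h; exact hm 0 (by simp [h])
    obtain ⟨i, b, hb, hmb⟩ := Nat.exists_eq_pow_mul_and_not_dvd
      (n := m + 1) (by omega) 2 (by norm_num)
    have hb0 : b ≠ 0 := by rintro rfl; exact hb ⟨0, rfl⟩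
    have h2i : 1 ≤ 2 ^ i := Nat.one_le_two_pow
    have hb3 : 3 ≤ b := by
      by_contra h
      have hb1 : 1 ≤ b := by omega
      interval_cases b
      · exact hm i (by omega)
      · exact hb ⟨1, rfl⟩
    obtain ⟨s, c, hc, hbc⟩ := Nat.exists_eq_pow_mul_and_not_dvd
      (n := b + 1) (by omega) 2 (by norm_num)
    have hc0 : c ≠ 0 := by rintro rfl; exact hc ⟨0, rfl⟩
    have hs1 : 1 ≤ s := by
      by_contra h
      have : s = 0 := by omega
      subst this
      rw [pow_zero, one_mul] at hbc
      omega
    obtain ⟨e, he⟩ : Odd c := Nat.odd_iff.mpr (by omega)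
    refine ⟨⟨e + 1, s - 1, i⟩, ⟨by omega, ?_⟩, ?_⟩
    · -- n = 1 → 1 ≤ j
      intro h1
      have hc1 : c = 1 := by omega
      subst hc1
      rw [mul_one] at hbc
      have h4 : (4 : ℕ) ≤ 2 ^ s := by
        rw [← hbc]; exact Nat.add_le_add_right hb3 1
      have := two_le_of_four_le_pow h4
      show 1 ≤ s - 1
      omega
    · -- f (e+1) (s-1) i = m
      simp only
      have key : (4 * (e + 1) - 2) * 2 ^ (s - 1) = b + 1 := by
        have h2c : (4 * (e + 1) - 2) = 2 * c := by omega
        calc (4 * (e + 1) - 2) * 2 ^ (s - 1) = c * (2 * 2 ^ (s - 1)) := by rw [h2c]; ring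
          _ = c * 2 ^ (s - 1 + 1) := by rw [pow_succ']
          _ = c * 2 ^ s := by rw [Nat.sub_add_cancel hs1]
          _ = b + 1 := by rw [hbc]; ring
      unfold f
      rw [key, Nat.add_sub_cancel]
      have h1 : b * 2 ^ i = m + 1 := by rw [hmb]; ring
      omega
end

section
/- Let m and d be natural numbers and let X be a topological d-manifold, i.e., a topological space equipped with a charted space structure modeled on Euclidean space ℝ^d (an atlas of partial homeomorphisms onto open subsets of ℝ^d covering X). Then the cup construction P(m, X), the quotient of S^m × X × X by (u, x, y) ∼ (−u, y, x), admits a charted space structure modeled on Euclidean space ℝ^{m+2d}; that is, P(m, X) is locally Euclidean of dimension m + 2d. -/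
/-- The cup construction `P(m, X)`: the quotient of `S^m × X × X` by the relation
`(u, x, y) ∼ (−u, y, x)`, where `S^m` is the unit sphere in `ℝ^{m+1}`. -/
def CupConstruction (m : ℕ) (X : Type*) [TopologicalSpace X] : Type _ :=
  Quot (fun p q : Metric.sphere (0 : EuclideanSpace ℝ (Fin (m + 1))) 1 × X × X =>
    q = (-p.1, p.2.2, p.2.1))

noncomputable instance (m : ℕ) (X : Type*) [TopologicalSpace X] :
    TopologicalSpace (CupConstruction m X) :=
  instTopologicalSpaceQuot

/-!
The quotient map `S^m × X × X → P(m, X)` identifies each point only with its image under the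
involution `σ (u, x, y) = (-u, y, x)`. Over the open hemisphere `⟪u, u₀⟫ > 0` the involution
moves every point off the hemisphere, so the quotient map is injective there; being open and
continuous, it is a local homeomorphism. Charts of `S^m × X × X`, which is locally
`ℝ^m × ℝ^d × ℝ^d ≃ ℝ^{m+2d}`, therefore push forward to charts of `P(m, X)`.
-/

open Set Function Topology Module

namespace Quot

variable {Y : Type*} {σ : Y → Y}

theorem mk_eq_mk_iff_of_involutive (hσ : Involutive σ) {a b : Y} :
    Quot.mk (fun p q => q = σ p) a = Quot.mk _ b ↔ a = b ∨ b = σ a := by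
  have hequiv : Equivalence fun a b : Y => a = b ∨ b = σ a :=
    { refl _ := .inl rfl
      symm := by
        rintro a b (rfl | rfl)
        exacts [.inl rfl, .inr (hσ a).symm]
      trans := by
        rintro a b c (rfl | rfl) (rfl | rfl)
        exacts [.inl rfl, .inr rfl, .inr rfl, .inl (hσ a).symm] }
  refine ⟨fun h => hequiv.eqvGen_iff.1 (Relation.EqvGen.mono ?_ _ _ (Quot.eqvGen_exact h)), ?_⟩
  · rintro a b rfl
    exact .inr rfl
  · rintro (rfl | rfl)
    exacts [rfl, Quot.sound rfl]

theorem preimage_image_mk_of_involutive (hσ : Involutive σ) (U : Set Y) :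
    Quot.mk (fun p q => q = σ p) ⁻¹' (Quot.mk _ '' U) = U ∪ σ ⁻¹' U := by
  ext z
  simp only [mem_preimage, mem_image, mem_union, mk_eq_mk_iff_of_involutive hσ]
  constructor
  · rintro ⟨w, hw, rfl | rfl⟩
    exacts [.inl hw, .inr ((hσ w).symm ▸ hw)]
  · rintro (hz | hz)
    exacts [⟨z, hz, .inl rfl⟩, ⟨σ z, hz, .inr (hσ z).symm⟩]

variable [TopologicalSpace Y]

theorem isOpenMap_mk_of_involutive (hσ : Involutive σ) (hσc : Continuous σ) :
    IsOpenMap (Quot.mk fun p q : Y => q = σ p) := fun U hU => by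
  rw [← isQuotientMap_quot_mk.isOpen_preimage, preimage_image_mk_of_involutive hσ]
  exact hU.union (hU.preimage hσc)

theorem isLocalHomeomorph_mk_of_involutive (hσ : Involutive σ) (hσc : Continuous σ)
    (hfree : ∀ y, ∃ U, IsOpen U ∧ y ∈ U ∧ ∀ z ∈ U, σ z ∉ U) :
    IsLocalHomeomorph (Quot.mk fun p q : Y => q = σ p) := by
  refine isLocalHomeomorph_iff_isOpenEmbedding_restrict.2 fun y => ?_
  obtain ⟨U, hUo, hyU, hUσ⟩ := hfree y
  have hinj : InjOn (Quot.mk fun p q : Y => q = σ p) U := by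
    intro a ha b hb hab
    rcases (mk_eq_mk_iff_of_involutive hσ).1 hab with h | rfl
    exacts [h, absurd hb (hUσ a ha)]
  exact ⟨U, hUo.mem_nhds hyU, .of_continuous_injective_isOpenMap
    (continuous_quot_mk.comp continuous_subtype_val) hinj.injective
    ((isOpenMap_mk_of_involutive hσ hσc).domRestrict hUo)⟩

end Quot

namespace CupConstruction

variable (m : ℕ) (X : Type*) [TopologicalSpace X]

theorem isLocalHomeomorph_mk :
    IsLocalHomeomorph (Quot.mk _ : Metric.sphere (0 : EuclideanSpace ℝ (Fin (m + 1))) 1 × X × X →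
      CupConstruction m X) := by
  refine Quot.isLocalHomeomorph_mk_of_involutive (fun p => by simp) (by fun_prop) fun p =>
    ⟨{z | 0 < inner ℝ (z.1 : EuclideanSpace ℝ (Fin (m + 1))) p.1}, ?_, ?_, ?_⟩
  · exact isOpen_lt continuous_const (by fun_prop)
  · simp
  · intro z hz hσz
    simp only [mem_ofPred_eq, coe_neg_sphere, inner_neg_left] at hz hσz
    linarith

end CupConstruction

/-- If `X` is a topological `d`-manifold, i.e. a charted space modeled on `ℝ^d`, then the
cup construction `P(m, X)` admits a charted space structure modeled on `ℝ^{m+2d}`;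
in other words, `P(m, X)` is locally Euclidean of dimension `m + 2d`. -/
theorem cupConstruction_chartedSpace (m d : ℕ) (X : Type*) [TopologicalSpace X]
    [ChartedSpace (EuclideanSpace ℝ (Fin d)) X] :
    Nonempty (ChartedSpace (EuclideanSpace ℝ (Fin (m + 2 * d))) (CupConstruction m X)) := by
  have hdim : finrank ℝ (EuclideanSpace ℝ (Fin (m + 2 * d))) =
      finrank ℝ (EuclideanSpace ℝ (Fin m) × EuclideanSpace ℝ (Fin d) ×
        EuclideanSpace ℝ (Fin d)) := by
    simp only [Module.finrank_prod, finrank_euclideanSpace_fin]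
    ring
  let _ : ChartedSpace (EuclideanSpace ℝ (Fin (m + 2 * d)))
      (ModelProd (EuclideanSpace ℝ (Fin m))
        (ModelProd (EuclideanSpace ℝ (Fin d)) (EuclideanSpace ℝ (Fin d)))) :=
    (ContinuousLinearEquiv.ofFinrankEq hdim).toHomeomorph.chartedSpace
  let _ := ChartedSpace.comp (EuclideanSpace ℝ (Fin (m + 2 * d)))
    (ModelProd (EuclideanSpace ℝ (Fin m))
      (ModelProd (EuclideanSpace ℝ (Fin d)) (EuclideanSpace ℝ (Fin d))))
    (Metric.sphere (0 : EuclideanSpace ℝ (Fin (m + 1))) 1 × X × X)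
  exact ⟨(CupConstruction.isLocalHomeomorph_mk m X).chartedSpace Quot.exists_rep⟩
end
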